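/- arXiv:1003.1767 — 5 statements merged into one kernel-verified Lean document; each statement's English description precedes it below -/
import Mathlib

section
/- For all positive integers p and q, χ(p,p) = 0 and χ(p,q) = χ(p, p+q) + χ(p+q, q). -/
/-- For positive integers `p`, `q`,
`χ(p,q) = (1/12)·(q/p + p/q + gcd(p,q)²/(p·q)) − 1/4` as a rational number. -/
def chiPQ (p q : ℕ) : ℚ :=
  (1 / 12) * ((q : ℚ) / p + (p : ℚ) / q + (Nat.gcd p q : ℚ) ^ 2 / (p * q)) - 1 / 4

theorem chiPQ_self_eq_zero_and_chiPQ_rec (p q : ℕ) (hp : 0 < p) (hq : 0 < q) :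
    chiPQ p p = 0 ∧ chiPQ p q = chiPQ p (p + q) + chiPQ (p + q) q := by
  have hp' : (p : ℚ) ≠ 0 := Nat.cast_ne_zero.mpr hp.ne'
  have hq' : (q : ℚ) ≠ 0 := Nat.cast_ne_zero.mpr hq.ne'
  have hpq' : ((p : ℚ) + q) ≠ 0 := by positivity
  have h1 : Nat.gcd p p = p := Nat.gcd_self p
  have h2 : Nat.gcd p (p + q) = Nat.gcd p q := by
    simp [Nat.gcd_comm, Nat.gcd_add_self_left, Nat.gcd_add_self_right, Nat.gcd_self_add_left, Nat.gcd_self_add_right]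
  have h3 : Nat.gcd (p + q) q = Nat.gcd p q := by
    simp [Nat.gcd_add_self_left, Nat.gcd_add_self_right, Nat.gcd_self_add_left, Nat.gcd_self_add_right]
  constructor
  · simp only [chiPQ, h1]
    field_simp
    ring
  · simp only [chiPQ, h2, h3, Nat.cast_add]
    field_simp
    ring
end

section
/- Let r ≥ 1 and let γ₀, γ₁, …, γ_{r+1} be positive integers such that γ_i divides γ_{i−1} + γ_{i+1} for every i with 1 ≤ i ≤ r, γ₀ divides γ₁ + γ_{r+1}, and γ_{r+1} divides γ_r + γ₀. Then Σ_{i=1}^{r+1} χ(γ_{i−1}, γ_i) = −χ(γ₀, γ_{r+1}). -/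
lemma chi_symm (p q : ℕ) : chiPQ p q = chiPQ q p := by
  unfold chiPQ; rw [Nat.gcd_comm]; ring

lemma chi_self (c : ℕ) (hc : 0 < c) : chiPQ c c = 0 := by
  have : (c:ℚ) ≠ 0 := by positivity
  unfold chiPQ; rw [Nat.gcd_self]; field_simp; ring

lemma chi_add (a b : ℕ) (ha : 0 < a) (hb : 0 < b) :
    chiPQ a (a + b) + chiPQ (a + b) b = chiPQ a b := by
  have h1 : Nat.gcd a (a + b) = Nat.gcd a b := by
    simp [Nat.gcd_add_self_right, Nat.gcd_add_self_left]
  have h2 : Nat.gcd (a + b) b = Nat.gcd a b := by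
    simp [Nat.add_comm, Nat.gcd_add_self_left, Nat.gcd_add_self_right]
  have ha' : (a:ℚ) ≠ 0 := by positivity
  have hb' : (b:ℚ) ≠ 0 := by positivity
  have hab' : (a:ℚ) + b ≠ 0 := by positivity
  unfold chiPQ; rw [h1, h2]; push_cast; field_simp; ring

lemma chi_two' (g a' b' : ℕ) (hg : 0 < g) (hgab : Nat.gcd a' b' = 1)
    (ha2 : a' ∣ 2) (hb2 : b' ∣ 2) (ha'pos : 0 < a') (hb'pos : 0 < b') :
    chiPQ (g * a') (g * b') = 0 := by
  have hgq : (g:ℚ) ≠ 0 := by positivity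
  have ha'le : a' ≤ 2 := Nat.le_of_dvd (by norm_num) ha2
  have hb'le : b' ≤ 2 := Nat.le_of_dvd (by norm_num) hb2
  unfold chiPQ
  rw [Nat.gcd_mul_left, hgab]
  interval_cases a' <;> interval_cases b' <;> [skip; skip; skip; norm_num at hgab] <;>
    push_cast <;> field_simp <;> ring

lemma chi_two (a b : ℕ) (ha : 0 < a) (hb : 0 < b) (h1 : a ∣ 2 * b) (h2 : b ∣ 2 * a) :
    chiPQ a b = 0 := by
  obtain ⟨a', ha'⟩ : Nat.gcd a b ∣ a := Nat.gcd_dvd_left a b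
  obtain ⟨b', hb'⟩ : Nat.gcd a b ∣ b := Nat.gcd_dvd_right a b
  have hgpos : 0 < Nat.gcd a b := Nat.gcd_pos_of_pos_left _ ha
  have hgab : Nat.gcd a' b' = 1 := by
    have h := Nat.gcd_mul_left (Nat.gcd a b) a' b'
    rw [← ha', ← hb'] at h
    nlinarith
  have ha'pos : 0 < a' := by
    rcases Nat.eq_zero_or_pos a' with h | h
    · subst h; rw [mul_zero] at ha'; omega
    · exact h
  have hb'pos : 0 < b' := by
    rcases Nat.eq_zero_or_pos b' with h | h
    · subst h; rw [mul_zero] at hb'; omega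
    · exact h
  have ha2 : a' ∣ 2 := by
    refine Nat.Coprime.dvd_of_dvd_mul_right (by exact hgab) ?_
    have h : Nat.gcd a b * a' ∣ Nat.gcd a b * (2 * b') := by
      rw [← ha', show Nat.gcd a b * (2 * b') = 2 * (Nat.gcd a b * b') by ring, ← hb']; exact h1
    exact (mul_dvd_mul_iff_left (by omega : Nat.gcd a b ≠ 0)).mp h
  have hb2 : b' ∣ 2 := by
    refine Nat.Coprime.dvd_of_dvd_mul_right (Nat.coprime_comm.mp (by exact hgab)) ?_
    have h : Nat.gcd a b * b' ∣ Nat.gcd a b * (2 * a') := by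
      rw [← hb', show Nat.gcd a b * (2 * a') = 2 * (Nat.gcd a b * a') by ring, ← ha']; exact h2
    exact (mul_dvd_mul_iff_left (by omega : Nat.gcd a b ≠ 0)).mp h
  rw [show chiPQ a b = chiPQ (Nat.gcd a b * a') (Nat.gcd a b * b') from by rw [← ha', ← hb']]
  exact chi_two' _ _ _ hgpos hgab ha2 hb2 ha'pos hb'pos

lemma dvd_trick {d X Y : ℕ} (h : d ∣ X) (e : X = Y + d) : d ∣ Y := by
  rw [e] at h
  exact (Nat.dvd_add_self_right).mp h

lemma icc_ioc (m : ℕ) : Finset.Icc 1 m = Finset.Ioc 0 m := by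
  ext x; simp [Nat.lt_iff_add_one_le]

lemma sum_shift (f : ℕ → ℚ) (a b : ℕ) :
    ∑ i ∈ Finset.Ioc (a+1) (b+1), f i = ∑ i ∈ Finset.Ioc a b, f (i+1) := by
  rw [← Finset.map_add_right_Ioc, Finset.sum_map]; rfl

lemma cyc : ∀ r : ℕ, ∀ γ : ℕ → ℕ,
    (∀ i ≤ r + 1, 0 < γ i) →
    (∀ i, 1 ≤ i → i ≤ r → γ i ∣ γ (i - 1) + γ (i + 1)) →
    (γ 0 ∣ γ 1 + γ (r + 1)) →
    (γ (r + 1) ∣ γ r + γ 0) →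
    ∑ i ∈ Finset.Icc 1 (r + 1), chiPQ (γ (i - 1)) (γ i) = -chiPQ (γ 0) (γ (r + 1)) := by
  intro r
  induction r using Nat.strong_induction_on with
  | _ r IH =>
  intro γ hpos hdiv hdiv0 hdivr
  rcases r with _ | s
  · -- base case r = 0
    have h0 : chiPQ (γ 0) (γ 1) = 0 := by
      refine chi_two _ _ (hpos 0 (by omega)) (hpos 1 (by omega)) ?_ ?_
      · have := hdiv0; rwa [show γ 1 + γ (0+1) = 2 * γ 1 by ring] at this
      · have := hdivr; rwa [show γ 0 + γ 0 = 2 * γ 0 by ring] at this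
    simp only [Finset.Icc_self, Finset.sum_singleton]
    norm_num [h0]
  · -- r = s + 1
    simp only [show s + 1 + 1 = s + 2 from rfl] at hpos hdiv0 hdivr ⊢
    by_cases hB : γ 0 = γ 1 + γ (s + 2)
    · -- contract vertex 0
      have hpos' : ∀ i ≤ s + 1, 0 < γ (i + 1) := fun i hi => hpos (i + 1) (by omega)
      have hdiv' : ∀ i, 1 ≤ i → i ≤ s → γ (i + 1) ∣ γ (i - 1 + 1) + γ (i + 1 + 1) := by
        intro i h1 h2
        have h := hdiv (i + 1) (by omega) (by omega)
        simp only [Nat.add_sub_cancel] at h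
        rwa [Nat.sub_add_cancel h1]
      have hdiv0' : γ 1 ∣ γ 2 + γ (s + 2) := by
        have h := hdiv 1 (by omega) (by omega)
        norm_num at h
        rw [hB] at h
        exact dvd_trick h (by omega)
      have hdivr' : γ (s + 2) ∣ γ (s + 1) + γ 1 := by
        have h := hdivr
        rw [hB] at h
        exact dvd_trick h (by omega)
      have IH' : ∑ i ∈ Finset.Icc 1 (s + 1), chiPQ (γ (i - 1 + 1)) (γ (i + 1))
          = -chiPQ (γ 1) (γ (s + 2)) :=
        IH s (by omega) (fun i => γ (i + 1)) hpos' hdiv' hdiv0' hdivr'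
      have IH2 : ∑ i ∈ Finset.Icc 1 (s + 1), chiPQ (γ i) (γ (i + 1))
          = -chiPQ (γ 1) (γ (s + 2)) := by
        rw [← IH']
        refine Finset.sum_congr rfl fun i hi => ?_
        rw [Finset.mem_Icc] at hi
        rw [Nat.sub_add_cancel hi.1]
      have hkey := chi_add (γ 1) (γ (s + 2)) (hpos 1 (by omega)) (hpos (s + 2) (by omega))
      rw [← hB] at hkey
      -- split goal sum
      rw [icc_ioc]
      rw [← Finset.sum_Ioc_consecutive _ (show (0:ℕ) ≤ 1 by omega) (show (1:ℕ) ≤ s + 2 by omega)]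
      rw [show (1:ℕ) = 0 + 1 from rfl, show s + 2 = (s + 1) + 1 from rfl, sum_shift]
      rw [show (0:ℕ) + 1 = 1 from rfl]
      have e1 : ∑ i ∈ Finset.Ioc 0 (0 + 1), chiPQ (γ (i - 1)) (γ i) = chiPQ (γ 0) (γ 1) := by
        norm_num
      rw [e1]
      have e2 : ∑ i ∈ Finset.Ioc 0 (s + 1), chiPQ (γ (i + 1 - 1)) (γ (i + 1))
          = ∑ i ∈ Finset.Icc 1 (s + 1), chiPQ (γ i) (γ (i + 1)) := by
        rw [icc_ioc]
        refine Finset.sum_congr rfl fun i hi => ?_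
        simp only [Nat.add_sub_cancel]
      rw [e2, IH2]
      have hsymm1 := chi_symm (γ 0) (γ 1)
      linarith [hkey, hsymm1]
    · by_cases hC : γ (s + 2) = γ (s + 1) + γ 0
      · -- contract last vertex

        have hpos' : ∀ i ≤ s + 1, 0 < γ i := fun i hi => hpos i (by omega)
        have hdiv' : ∀ i, 1 ≤ i → i ≤ s → γ i ∣ γ (i - 1) + γ (i + 1) :=
          fun i h1 h2 => hdiv i h1 (by omega)
        have hdiv0' : γ 0 ∣ γ 1 + γ (s + 1) := by
          have h := hdiv0
          rw [hC] at h
          exact dvd_trick h (by omega)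
        have hdivr' : γ (s + 1) ∣ γ s + γ 0 := by
          have h := hdiv (s + 1) (by omega) (by omega)
          simp only [Nat.add_sub_cancel] at h
          rw [hC] at h
          exact dvd_trick h (by omega)
        have IH' := IH s (by omega) γ hpos' hdiv' hdiv0' hdivr'
        rw [Finset.sum_Icc_succ_top (show (1:ℕ) ≤ s + 2 by omega), IH']
        simp only [Nat.add_sub_cancel]
        have hkey := chi_add (γ (s + 1)) (γ 0) (hpos (s + 1) (by omega)) (hpos 0 (by omega))
        rw [← hC] at hkey
        linarith [chi_symm (γ 0) (γ (s + 1)), chi_symm (γ (s + 2)) (γ 0)]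
      · by_cases hA : ∃ j, 1 ≤ j ∧ j ≤ s + 1 ∧ γ j = γ (j - 1) + γ (j + 1)
        · obtain ⟨j, hj1, hjle, hjs0⟩ := hA
          obtain ⟨k, rfl⟩ : ∃ k, j = k + 1 := ⟨j - 1, by omega⟩
          have hk : k ≤ s := by omega
          have hjs : γ (k + 1) = γ k + γ (k + 2) := by
            rw [hjs0, Nat.add_sub_cancel]

          have hpos' : ∀ i, i ≤ s + 1 → 0 < if i < k + 1 then γ i else γ (i + 1) := by
            intro i hi
            split <;> exact hpos _ (by omega)
          have hdiv' : ∀ i, 1 ≤ i → i ≤ s →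
              (if i < k + 1 then γ i else γ (i + 1)) ∣
                (if i - 1 < k + 1 then γ (i - 1) else γ (i - 1 + 1)) +
                (if i + 1 < k + 1 then γ (i + 1) else γ (i + 2)) := by
            intro i h1 h2
            rcases Nat.lt_trichotomy i k with hik | rfl | hik
            · rw [if_pos (by omega), if_pos (by omega), if_pos (by omega)]
              exact hdiv i h1 (by omega)
            · rw [if_pos (by omega), if_pos (by omega), if_neg (by omega)]
              have h := hdiv i h1 (by omega)
              rw [hjs] at h
              exact dvd_trick h (by omega)
            · rcases Nat.lt_or_ge i (k + 2) with hik2 | hik2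
              · have hik1 : i = k + 1 := by omega
                subst hik1
                rw [if_neg (by omega), if_pos (by omega), if_neg (by omega)]
                simp only [Nat.add_sub_cancel]
                show γ (k + 2) ∣ γ k + γ (k + 3)
                have h := hdiv (k + 2) (by omega) (by omega)
                rw [show k + 2 - 1 = k + 1 from by omega, hjs,
                  show k + 2 + 1 = k + 3 from rfl] at h
                exact dvd_trick h (by omega)
              · rw [if_neg (by omega), if_neg (by omega), if_neg (by omega)]
                have h := hdiv (i + 1) (by omega) (by omega)
                rw [Nat.add_sub_cancel, show i + 1 + 1 = i + 2 from rfl] at h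
                rwa [Nat.sub_add_cancel (by omega)]
          have hdiv0' : (if 0 < k + 1 then γ 0 else γ 1) ∣
              (if 1 < k + 1 then γ 1 else γ 2) +
              (if s + 1 < k + 1 then γ (s + 1) else γ (s + 2)) := by
            rw [if_pos (show 0 < k + 1 by omega), if_neg (show ¬ (s + 1 < k + 1) by omega)]
            rcases Nat.eq_zero_or_pos k with rfl | hk1
            · rw [if_neg (show ¬ ((1:ℕ) < 0 + 1) by omega)]
              have h := hdiv0
              rw [show γ 1 = γ 0 + γ (0 + 2) from hjs, show (0:ℕ) + 2 = 2 from rfl] at h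
              exact dvd_trick h (by omega)
            · rw [if_pos (show 1 < k + 1 by omega)]
              exact hdiv0
          have hdivr' : (if s + 1 < k + 1 then γ (s + 1) else γ (s + 2)) ∣
              (if s < k + 1 then γ s else γ (s + 1)) + (if 0 < k + 1 then γ 0 else γ 1) := by
            rw [if_neg (show ¬ (s + 1 < k + 1) by omega), if_pos (show 0 < k + 1 by omega)]
            rcases Nat.lt_or_ge k s with hks | hks
            · rw [if_neg (show ¬ (s < k + 1) by omega)]
              exact hdivr
            · have hks' : s = k := by omega
              rw [if_pos (show s < k + 1 by omega)]
              rw [← hks'] at hjs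
              have h := hdivr
              rw [hjs] at h
              exact dvd_trick h (by omega)
          have IH' : ∑ i ∈ Finset.Icc 1 (s + 1),
                chiPQ (if i - 1 < k + 1 then γ (i - 1) else γ (i - 1 + 1))
                  (if i < k + 1 then γ i else γ (i + 1))
              = -chiPQ (if 0 < k + 1 then γ 0 else γ 1)
                  (if s + 1 < k + 1 then γ (s + 1) else γ (s + 2)) :=
            IH s (by omega) (fun i => if i < k + 1 then γ i else γ (i + 1)) hpos' hdiv' hdiv0' hdivr'
          rw [if_pos (show 0 < k + 1 by omega), if_neg (show ¬ (s + 1 < k + 1) by omega)] at IH'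
          set f : ℕ → ℚ := fun i => chiPQ (γ (i - 1)) (γ i) with hf
          set g : ℕ → ℚ := fun i =>
            chiPQ (if i - 1 < k + 1 then γ (i - 1) else γ (i - 1 + 1))
              (if i < k + 1 then γ i else γ (i + 1)) with hg
          have split1 : ∑ i ∈ Finset.Icc 1 (s + 2), f i
              = (∑ i ∈ Finset.Ioc 0 k, f i) + (f (k + 1) + f (k + 2))
                + ∑ i ∈ Finset.Ioc (k + 2) (s + 2), f i := by
            rw [icc_ioc]
            rw [← Finset.sum_Ioc_consecutive _ (show (0:ℕ) ≤ k + 2 by omega) (show k + 2 ≤ s + 2 by omega)]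
            rw [← Finset.sum_Ioc_consecutive _ (show (0:ℕ) ≤ k by omega) (show k ≤ k + 2 by omega)]
            congr 1
            have e1 : ∑ i ∈ Finset.Ioc k (k + 2), f i
                = (∑ i ∈ Finset.Ioc k (k + 1), f i) + f (k + 2) :=
              Finset.sum_Ioc_succ_top (by omega) f
            have e2 : ∑ i ∈ Finset.Ioc k (k + 1), f i
                = (∑ i ∈ Finset.Ioc k k, f i) + f (k + 1) :=
              Finset.sum_Ioc_succ_top (by omega) f
            rw [e1, e2, Finset.Ioc_self, Finset.sum_empty, zero_add]
          have split2 : ∑ i ∈ Finset.Icc 1 (s + 1), g i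
              = (∑ i ∈ Finset.Ioc 0 k, f i) + chiPQ (γ k) (γ (k + 2))
                + ∑ i ∈ Finset.Ioc (k + 2) (s + 2), f i := by
            rw [icc_ioc]
            rw [← Finset.sum_Ioc_consecutive _ (show (0:ℕ) ≤ k + 1 by omega) (show k + 1 ≤ s + 1 by omega)]
            rw [← Finset.sum_Ioc_consecutive _ (show (0:ℕ) ≤ k by omega) (show k ≤ k + 1 by omega)]
            congr 1
            · congr 1
              · refine Finset.sum_congr rfl fun i hi => ?_
                rw [Finset.mem_Ioc] at hi
                simp only [hg, hf]
                rw [if_pos (by omega), if_pos (by omega)]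
              · have e2 : ∑ i ∈ Finset.Ioc k (k + 1), g i
                    = (∑ i ∈ Finset.Ioc k k, g i) + g (k + 1) :=
                  Finset.sum_Ioc_succ_top (by omega) g
                rw [e2, Finset.Ioc_self, Finset.sum_empty, zero_add]
                simp only [hg]
                rw [if_pos (by omega), if_neg (by omega)]
                simp only [Nat.add_sub_cancel]
            · have e3 : ∑ i ∈ Finset.Ioc (k + 2) (s + 2), f i
                  = ∑ i ∈ Finset.Ioc (k + 1) (s + 1), f (i + 1) := sum_shift f (k + 1) (s + 1)
              rw [e3]
              refine Finset.sum_congr rfl fun i hi => ?_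
              rw [Finset.mem_Ioc] at hi
              simp only [hg, hf]
              rw [if_neg (by omega), if_neg (by omega)]
              simp only [Nat.add_sub_cancel]
              rw [Nat.sub_add_cancel (by omega)]
          have hkey := chi_add (γ k) (γ (k + 2)) (hpos k (by omega)) (hpos (k + 2) (by omega))
          rw [← hjs] at hkey
          have hfk : f (k + 1) + f (k + 2) = chiPQ (γ k) (γ (k + 2)) := by
            simp only [hf, Nat.add_sub_cancel]
            rw [show k + 2 - 1 = k + 1 from by omega]
            exact hkey
          rw [split1, hfk, ← split2, IH']
        · -- constant case

          push_neg at hA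
          -- a little helper: divisibility + not equal + positive ⇒ twice
          have twice : ∀ d X : ℕ, 0 < d → 0 < X → d ∣ X → X ≠ d → 2 * d ≤ X := by
            intro d X hd hX ⟨q, hq⟩ hne
            rcases q with _ | _ | q
            · omega
            · omega
            · subst hq; nlinarith
          have h2γ : ∀ j, 1 ≤ j → j ≤ s + 1 → 2 * γ j ≤ γ (j - 1) + γ (j + 1) := by
            intro j h1 h2
            refine twice _ _ (hpos j (by omega)) ?_ (hdiv j h1 h2) ?_
            · have := hpos (j + 1) (by omega); omega
            · intro h; exact hA j h1 h2 h.symm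
          have h20 : 2 * γ 0 ≤ γ 1 + γ (s + 2) := by
            refine twice _ _ (hpos 0 (by omega)) ?_ hdiv0 ?_
            · have := hpos 1 (by omega); omega
            · intro h; exact hB h.symm
          have h2r : 2 * γ (s + 2) ≤ γ (s + 1) + γ 0 := by
            refine twice _ _ (hpos (s + 2) (by omega)) ?_ hdivr ?_
            · have := hpos 0 (by omega); omega
            · intro h; exact hC h.symm
          -- differences
          set D : ℕ → ℤ := fun i => (γ (i + 1) : ℤ) - γ i with hD
          have step : ∀ m, m + 1 ≤ s + 1 → D m ≤ D (m + 1) := by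
            intro m hm
            have h := h2γ (m + 1) (by omega) (by omega)
            simp only [Nat.add_sub_cancel] at h
            simp only [hD]
            push_cast
            omega
          have mono : ∀ j, j ≤ s + 1 → ∀ i, i ≤ j → D i ≤ D j := by
            intro j
            induction j with
            | zero => intro _ i hi; interval_cases i; exact le_refl _
            | succ m ih =>
              intro hm i hi
              rcases Nat.lt_or_ge i (m + 1) with h | h
              · exact le_trans (ih (by omega) i (by omega)) (step m hm)
              · have : i = m + 1 := by omega
                subst this; exact le_refl _
          have hW0 : (γ 0 : ℤ) - γ (s + 2) ≤ D 0 := by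
            simp only [hD]; push_cast; omega
          have hWr : D (s + 1) ≤ (γ 0 : ℤ) - γ (s + 2) := by
            simp only [hD]
            have : (s : ℕ) + 1 + 1 = s + 2 := rfl
            rw [this]
            push_cast; omega
          have hDall : ∀ i ≤ s + 1, D i = (γ 0 : ℤ) - γ (s + 2) := by
            intro i hi
            have h1 := mono i hi 0 (by omega)
            have h2 := mono (s + 1) (by omega) i hi
            omega
          have hW : (γ 0 : ℤ) - γ (s + 2) = 0 := by
            have lin : ∀ i, i ≤ s + 2 → (γ i : ℤ) = γ 0 + i * ((γ 0 : ℤ) - γ (s + 2)) := by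
              intro i
              induction i with
              | zero => intro _; simp
              | succ m ih =>
                intro hm
                have h1 := ih (by omega)
                have h2 := hDall m (by omega)
                simp only [hD] at h2
                push_cast
                have : ((m : ℤ) + 1) * ((γ 0 : ℤ) - γ (s + 2)) = m * ((γ 0 : ℤ) - γ (s + 2)) + ((γ 0 : ℤ) - γ (s + 2)) := by ring
                rw [this]
                omega
            have h := lin (s + 2) (le_refl _)
            push_cast at h
            nlinarith [h]
          have hconst : ∀ i ≤ s + 2, γ i = γ 0 := by
            intro i hi
            have h := hW
            have lin : ∀ i, i ≤ s + 2 → (γ i : ℤ) = γ 0 := by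
              intro i
              induction i with
              | zero => intro _; rfl
              | succ m ih =>
                intro hm
                have h1 := ih (by omega)
                have h2 := hDall m (by omega)
                simp only [hD] at h2
                omega
            have := lin i hi
            exact_mod_cast this
          have hall : ∀ i ∈ Finset.Icc 1 (s + 2), chiPQ (γ (i - 1)) (γ i) = 0 := by
            intro i hi
            rw [Finset.mem_Icc] at hi
            rw [hconst (i - 1) (by omega), hconst i (by omega)]
            exact chi_self _ (hpos 0 (by omega))
          rw [Finset.sum_eq_zero hall, hconst (s + 2) (le_refl _), chi_self _ (hpos 0 (by omega))]
          ring

theorem sum_chiPQ_chain_eq_neg_chiPQ (r : ℕ) (hr : 1 ≤ r) (γ : ℕ → ℕ)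
    (hpos : ∀ i ≤ r + 1, 0 < γ i)
    (hdiv : ∀ i, 1 ≤ i → i ≤ r → γ i ∣ γ (i - 1) + γ (i + 1))
    (hdiv0 : γ 0 ∣ γ 1 + γ (r + 1))
    (hdivr : γ (r + 1) ∣ γ r + γ 0) :
    ∑ i ∈ Finset.Icc 1 (r + 1), chiPQ (γ (i - 1)) (γ i) = -chiPQ (γ 0) (γ (r + 1)) :=
  cyc r γ hpos hdiv hdiv0 hdivr
end

section
/- (Dedekind reciprocity law) For coprime positive integers p and q, s(p,q) + s(q,p) = χ(p,q), i.e. s(p,q) + s(q,p) = (1/12)·(p/q + q/p + 1/(p·q)) − 1/4. -/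
/-!
For `0 < i < q` the sawtooth values are `((i/q)) = i/q - 1/2` and `((pi/q)) = (pi mod q)/q - 1/2`,
so `s(p,q)` is, up to power sums, `q⁻² Σ i (pi mod q)`; by the division algorithm this is in
turn governed by `Σ i ⌊pi/q⌋`. Summing `i` over the lattice points below the line `qj = pi`
first by columns and then by rows trades this for `Σ ⌊qj/p⌋ (⌊qj/p⌋ + 1)`, which the division
algorithm expresses through `Σ j (qj mod p)`, i.e. through `s(q,p)`. In `s(p,q) + s(q,p)` these
sums cancel and only power sums remain.
-/

/-- The sawtooth function `((x)) = x − ⌊x⌋ − 1/2` if `x ∉ ℤ`, and `0` if `x ∈ ℤ`. -/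
def sawtooth (x : ℚ) : ℚ :=
  if (⌊x⌋ : ℚ) = x then 0 else x - ⌊x⌋ - 1 / 2

/-- The Dedekind sum `s(p,q) = Σ_{i=0}^{q−1} ((p·i/q))·((i/q))`. -/
def dedekindSum (p : ℤ) (q : ℕ) : ℚ :=
  ∑ i ∈ Finset.range q, sawtooth ((p : ℚ) * i / q) * sawtooth ((i : ℚ) / q)

open Finset

theorem sum_range_natCast (n : ℕ) : ∑ i ∈ range n, (i : ℚ) = n * (n - 1) / 2 := by
  induction n with
  | zero => simp
  | succ n ih => rw [sum_range_succ, ih]; push_cast; ring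

theorem sum_range_natCast_sq (n : ℕ) :
    ∑ i ∈ range n, (i : ℚ) ^ 2 = n * (n - 1) * (2 * n - 1) / 6 := by
  induction n with
  | zero => simp
  | succ n ih => rw [sum_range_succ, ih]; push_cast; ring

theorem sum_range_mul_mod {M : Type*} [AddCommMonoid M] {p q : ℕ} (hpq : p.Coprime q)
    (f : ℕ → M) : ∑ i ∈ range q, f (p * i % q) = ∑ i ∈ range q, f i := by
  have hinj : Set.InjOn (fun i => p * i % q) (range q) := fun a ha b hb hab =>
    Nat.ModEq.eq_of_lt_of_lt (Nat.ModEq.cancel_left_of_coprime hpq.symm hab)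
      (mem_range.1 ha) (mem_range.1 hb)
  have himage : (range q).image (fun i => p * i % q) = range q :=
    eq_of_subset_of_card_le
      (image_subset_iff.2 fun i hi =>
        mem_range.2 (Nat.mod_lt _ (Nat.zero_lt_of_lt (mem_range.1 hi))))
      (card_image_of_injOn hinj).ge
  rw [← sum_image hinj, himage]

theorem sawtooth_of_fract_ne_zero {x : ℚ} (hx : Int.fract x ≠ 0) :
    sawtooth x = Int.fract x - 1 / 2 := by
  rw [sawtooth, if_neg fun h => hx (by rw [← Int.self_sub_floor, h, sub_self]),
    Int.self_sub_floor]

theorem sawtooth_natCast_div {n q : ℕ} (hq : q ≠ 0) (hn : ¬ q ∣ n) :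
    sawtooth (n / q) = (n % q : ℕ) / q - 1 / 2 := by
  have hfract : Int.fract ((n : ℚ) / q) = (n % q : ℕ) / q :=
    Int.fract_div_natCast_eq_div_natCast_mod
  have hmod : ((n % q : ℕ) : ℚ) ≠ 0 := Nat.cast_ne_zero.2 fun h => hn (Nat.dvd_of_mod_eq_zero h)
  rw [sawtooth_of_fract_ne_zero (hfract ▸ div_ne_zero hmod (Nat.cast_ne_zero.2 hq)), hfract]

theorem dedekindSum_eq_sum_mul_mod {p q : ℕ} (hq : 0 < q) (hpq : p.Coprime q) :
    dedekindSum p q = (∑ i ∈ range q, (i : ℚ) * (p * i % q : ℕ)) / q ^ 2 - (q - 1) / 4 := by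
  have hterm : ∀ i ∈ range q, sawtooth ((p : ℤ) * i / q) * sawtooth (i / q) =
      ((i : ℚ) / q - 1 / 2) * ((p * i % q : ℕ) / q - 1 / 2) - if i = 0 then 1 / 4 else 0 := by
    intro i hi
    rcases eq_or_ne i 0 with rfl | hi0
    · norm_num [sawtooth]
    · have hqi : ¬ q ∣ i := Nat.not_dvd_of_pos_of_lt (Nat.pos_of_ne_zero hi0) (mem_range.1 hi)
      have hqpi : ¬ q ∣ p * i := fun h => hqi (hpq.symm.dvd_of_dvd_mul_left h)
      rw [Int.cast_natCast, ← Nat.cast_mul, sawtooth_natCast_div hq.ne' hqpi,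
        sawtooth_natCast_div hq.ne' hqi, Nat.mod_eq_of_lt (mem_range.1 hi), if_neg hi0, sub_zero,
        mul_comm]
  have hres : ∑ i ∈ range q, ((p * i % q : ℕ) : ℚ) = ∑ i ∈ range q, (i : ℚ) :=
    sum_range_mul_mod hpq (fun n => (n : ℚ))
  rw [dedekindSum, sum_congr rfl hterm, sum_sub_distrib, sum_ite_eq' (range q) 0,
    if_pos (mem_range.2 hq)]
  simp only [sub_mul, mul_sub, sum_sub_distrib, div_mul_div_comm, ← sum_div, ← mul_sum, ← sum_mul,
    sum_const, card_range, nsmul_eq_mul, hres, sum_range_natCast]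
  field_simp
  ring

theorem sum_mul_mod_eq_sub_sum_mul_div (p q : ℕ) :
    ∑ i ∈ range q, (i : ℚ) * (p * i % q : ℕ) =
      p * ∑ i ∈ range q, (i : ℚ) ^ 2 - q * ∑ i ∈ range q, (i : ℚ) * (p * i / q : ℕ) := by
  rw [mul_sum, mul_sum, ← sum_sub_distrib]
  refine sum_congr rfl fun i _ => ?_
  have hdiv : ((p * i % q : ℕ) : ℚ) + q * (p * i / q : ℕ) = p * i := by
    exact_mod_cast Nat.mod_add_div (p * i) q
  linear_combination (i : ℚ) * hdiv

theorem two_mul_sum_Ico_add_mul_succ {m n : ℕ} (h : m < n) :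
    2 * ∑ i ∈ Ico (m + 1) n, i + m * (m + 1) = n * (n - 1) := by
  have hsplit := sum_range_add_sum_Ico (fun i => i) (show m + 1 ≤ n from h)
  have hm := sum_range_id_mul_two (m + 1)
  have hn := sum_range_id_mul_two n
  rw [Nat.add_sub_cancel, mul_comm (m + 1)] at hm
  omega

theorem card_filter_mul_lt_mul {p q i : ℕ} (hp : 0 < p) (hpq : p.Coprime q) (hi : 0 < i)
    (hiq : i < q) : #{j ∈ range p | q * j < p * i} = p * i / q + 1 := by
  have hq : 0 < q := hi.trans hiq
  have hlt : p * i / q < p := (Nat.div_lt_iff_lt_mul hq).2 ((Nat.mul_lt_mul_left hp).2 hiq)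
  have hne : ∀ j, q * j ≠ p * i := fun j h =>
    Nat.not_dvd_of_pos_of_lt hi hiq (hpq.symm.dvd_of_dvd_mul_left (Dvd.intro j h))
  suffices {j ∈ range p | q * j < p * i} = range (p * i / q + 1) by rw [this, card_range]
  ext j
  have hle : j ≤ p * i / q ↔ q * j ≤ p * i := by rw [Nat.le_div_iff_mul_le hq, mul_comm]
  have := hne j
  simp only [mem_filter, mem_range]
  omega

/-- Sum `i` over the lattice points `0 ≤ i < q`, `0 ≤ j < p` with `q * j < p * i`, once by
columns `i` and once by rows `j`. -/
theorem two_mul_sum_mul_div_add {p q : ℕ} (hp : 0 < p) (hq : 0 < q) (hpq : p.Coprime q) :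
    2 * ∑ i ∈ range q, i * (p * i / q + 1) + ∑ j ∈ range p, q * j / p * (q * j / p + 1) =
      p * (q * (q - 1)) := by
  have hrow : ∀ i ∈ range q,
      i * (p * i / q + 1) = ∑ j ∈ range p, if q * j < p * i then i else 0 := by
    intro i hi
    rw [← sum_filter, sum_const, smul_eq_mul]
    rcases Nat.eq_zero_or_pos i with rfl | hi0
    · simp
    · rw [card_filter_mul_lt_mul hp hpq hi0 (mem_range.1 hi), mul_comm]
  have hcol : ∀ j ∈ range p,
      ∑ i ∈ range q, (if q * j < p * i then i else 0) = ∑ i ∈ Ico (q * j / p + 1) q, i := by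
    intro j _
    rw [← sum_filter]
    congr 1
    ext i
    have : q * j / p < i ↔ q * j < p * i := by rw [Nat.div_lt_iff_lt_mul hp, mul_comm i]
    simp only [mem_filter, mem_range, mem_Ico]
    omega
  calc _ = ∑ j ∈ range p, (2 * ∑ i ∈ Ico (q * j / p + 1) q, i + q * j / p * (q * j / p + 1)) := by
        rw [sum_congr rfl hrow, sum_comm, sum_congr rfl hcol, mul_sum, sum_add_distrib]
    _ = ∑ j ∈ range p, q * (q - 1) := sum_congr rfl fun j hj =>
        two_mul_sum_Ico_add_mul_succ ((Nat.div_lt_iff_lt_mul hp).2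
          ((Nat.mul_lt_mul_left hq).2 (mem_range.1 hj)))
    _ = p * (q * (q - 1)) := by rw [sum_const, card_range, smul_eq_mul]

theorem sq_mul_sum_div_mul_succ {p q : ℕ} (hpq : p.Coprime q) :
    (p : ℚ) ^ 2 * ∑ j ∈ range p, ((q * j / p : ℕ) : ℚ) * ((q * j / p : ℕ) + 1) =
      (q ^ 2 + 1) * ∑ j ∈ range p, (j : ℚ) ^ 2 - 2 * q * ∑ j ∈ range p, (j : ℚ) * (q * j % p : ℕ)
        + p * (q - 1) * ∑ j ∈ range p, (j : ℚ) := by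
  have hsq : ∑ j ∈ range p, ((q * j % p : ℕ) : ℚ) ^ 2 = ∑ j ∈ range p, (j : ℚ) ^ 2 :=
    sum_range_mul_mod hpq.symm (fun n => (n : ℚ) ^ 2)
  have hid : ∑ j ∈ range p, ((q * j % p : ℕ) : ℚ) = ∑ j ∈ range p, (j : ℚ) :=
    sum_range_mul_mod hpq.symm (fun n => (n : ℚ))
  calc _ = ∑ j ∈ range p, (q ^ 2 * (j : ℚ) ^ 2 + ((q * j % p : ℕ) : ℚ) ^ 2 + p * q * j
          - 2 * q * (j * (q * j % p : ℕ)) - p * (q * j % p : ℕ)) := by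
        rw [mul_sum]
        refine sum_congr rfl fun j _ => ?_
        have hdiv : ((q * j % p : ℕ) : ℚ) + p * (q * j / p : ℕ) = q * j := by
          exact_mod_cast Nat.mod_add_div (q * j) p
        linear_combination (p * (q * j / p : ℕ) + q * j - (q * j % p : ℕ) + p) * hdiv
    _ = _ := by
        simp only [sum_add_distrib, sum_sub_distrib, ← mul_sum, hsq, hid]
        ring

/-- Dedekind's reciprocity law: for coprime positive integers `p` and `q`,
`s(p,q) + s(q,p) = (1/12)·(p/q + q/p + 1/(p·q)) − 1/4`. -/
theorem dedekind_reciprocity (p q : ℕ) (hp : 0 < p) (hq : 0 < q)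
    (hpq : Nat.Coprime p q) :
    dedekindSum p q + dedekindSum q p =
      (1 / 12) * ((p : ℚ) / q + (q : ℚ) / p + 1 / (p * q)) - 1 / 4 := by
  have hlattice : 2 * (∑ i ∈ range q, (i : ℚ) * (p * i / q : ℕ) + ∑ i ∈ range q, (i : ℚ))
      + ∑ j ∈ range p, ((q * j / p : ℕ) : ℚ) * ((q * j / p : ℕ) + 1) = p * (q * (q - 1)) := by
    have := congrArg (Nat.cast : ℕ → ℚ) (two_mul_sum_mul_div_add hp hq hpq)
    push_cast [Nat.cast_sub (show 1 ≤ q from hq)] at this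
    rwa [sum_congr rfl fun (i : ℕ) _ => mul_add_one (i : ℚ) ((p * i / q : ℕ) : ℚ),
      sum_add_distrib] at this
  have hfloor := sq_mul_sum_div_mul_succ hpq
  rw [dedekindSum_eq_sum_mul_mod hq hpq, dedekindSum_eq_sum_mul_mod hp hpq.symm,
    sum_mul_mod_eq_sub_sum_mul_div]
  rw [sum_range_natCast, sum_range_natCast_sq] at *
  have hp0 : (p : ℚ) ≠ 0 := by positivity
  have hq0 : (q : ℚ) ≠ 0 := by positivity
  linear_combination (norm := skip)
    (-1 / (2 * q) : ℚ) * hlattice + (1 / (2 * q * p ^ 2) : ℚ) * hfloor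
  field_simp
  ring
end

section
/- (Artin's lemma, matrix form) Let M be a symmetric real r×r matrix with M_{ij} ≥ 0 for all i ≠ j, and suppose the graph on {1,…,r} with an edge between i and j whenever i ≠ j and M_{ij} > 0 is connected. If there exists a vector d with d_i > 0 for all i such that (Md)_i ≤ 0 for all i and dᵀMd < 0, then M is negative definite. -/
open Matrix

/-- Artin's contractibility lemma, matrix form: a symmetric real matrix with nonnegative
off-diagonal entries whose positivity graph is connected, admitting a positive vector `d`
with `(Md)ᵢ ≤ 0` for all `i` and `dᵀMd < 0`, is negative definite. -/
theorem artin_lemma_matrix_form {r : ℕ} (M : Matrix (Fin r) (Fin r) ℝ)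
    (hsymm : M.IsSymm)
    (hoff : ∀ i j, i ≠ j → 0 ≤ M i j)
    (hconn : (SimpleGraph.fromRel fun i j => 0 < M i j).Connected)
    (d : Fin r → ℝ) (hd : ∀ i, 0 < d i)
    (hMd : ∀ i, M.mulVec d i ≤ 0)
    (hneg : d ⬝ᵥ M.mulVec d < 0) :
    ∀ x : Fin r → ℝ, x ≠ 0 → x ⬝ᵥ M.mulVec x < 0 := by
  have hM : ∀ i j, M j i = M i j := fun i j => hsymm.apply i j
  intro x hx
  have hdne : ∀ i, d i ≠ 0 := fun i => (hd i).ne'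
  set y : Fin r → ℝ := fun i => x i / d i with hy
  have hxy : ∀ i, x i = y i * d i := fun i =>
    (div_mul_cancel₀ (x i) (hdne i)).symm
  by_cases hconst : ∀ i j, y i = y j
  · obtain ⟨i0⟩ := hconn.nonempty
    have hcne : y i0 ≠ 0 := by
      intro h0
      apply hx
      funext i
      rw [hxy i, hconst i i0, h0, zero_mul]; rfl
    have hxd : x = y i0 • d := by
      funext i
      simp [hxy i, hconst i i0, mul_comm]
    rw [hxd, Matrix.mulVec_smul, smul_dotProduct, dotProduct_smul]
    have h2 : 0 < y i0 * y i0 := mul_self_pos.mpr hcne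
    simp only [smul_eq_mul]
    nlinarith [hneg, h2]
  · -- key algebraic identity
    have swap : ∑ i, ∑ j, (M i j * d i * d j) * (y i ^ 2 - y j ^ 2) = 0 := by
      set S := ∑ i, ∑ j, (M i j * d i * d j) * (y i ^ 2 - y j ^ 2) with hS
      have h1 : S = ∑ j, ∑ i, (M i j * d i * d j) * (y i ^ 2 - y j ^ 2) :=
        Finset.sum_comm
      have h2 : ∑ j, ∑ i, (M i j * d i * d j) * (y i ^ 2 - y j ^ 2) = -S := by
        rw [hS, ← Finset.sum_neg_distrib]
        refine Finset.sum_congr rfl fun a _ => ?_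
        rw [← Finset.sum_neg_distrib]
        refine Finset.sum_congr rfl fun b _ => ?_
        rw [hM a b]
        ring
      have : S = -S := h1.trans h2
      linarith
    have key : x ⬝ᵥ M.mulVec x =
        (∑ i, y i ^ 2 * (d i * M.mulVec d i)) -
          (1 / 2) * ∑ i, ∑ j, (M i j * d i * d j) * (y i - y j) ^ 2 := by
      have e1 : x ⬝ᵥ M.mulVec x
          = ∑ i, ∑ j, (M i j * d i * d j) * (y i * y j) := by
        simp only [dotProduct, mulVec, Finset.mul_sum]
        refine Finset.sum_congr rfl fun i _ => Finset.sum_congr rfl fun j _ => ?_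
        rw [hxy i, hxy j]; ring
      have e2 : (∑ i, y i ^ 2 * (d i * M.mulVec d i))
          = ∑ i, ∑ j, (M i j * d i * d j) * y i ^ 2 := by
        simp only [mulVec, dotProduct, Finset.mul_sum]
        refine Finset.sum_congr rfl fun i _ => Finset.sum_congr rfl fun j _ => ?_
        ring
      rw [e1, e2, Finset.mul_sum, ← Finset.sum_sub_distrib]
      have e3 : ∀ i : Fin r,
          (∑ j, (M i j * d i * d j) * y i ^ 2) -
            (1 / 2) * ∑ j, (M i j * d i * d j) * (y i - y j) ^ 2
          = ∑ j, ((M i j * d i * d j) * (y i * y j)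
              + (1 / 2) * ((M i j * d i * d j) * (y i ^ 2 - y j ^ 2))) := by
        intro i
        rw [Finset.mul_sum, ← Finset.sum_sub_distrib]
        refine Finset.sum_congr rfl fun j _ => ?_
        ring
      calc ∑ i, ∑ j, (M i j * d i * d j) * (y i * y j)
          = ∑ i, ∑ j, ((M i j * d i * d j) * (y i * y j)
              + (1 / 2) * ((M i j * d i * d j) * (y i ^ 2 - y j ^ 2))) := by
            simp only [Finset.sum_add_distrib, ← Finset.mul_sum, swap, mul_zero, add_zero]
        _ = ∑ i, ((∑ j, (M i j * d i * d j) * y i ^ 2) -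
              (1 / 2) * ∑ j, (M i j * d i * d j) * (y i - y j) ^ 2) := by
            exact Finset.sum_congr rfl fun i _ => (e3 i).symm
    -- nonpositivity of first term
    have T1 : (∑ i, y i ^ 2 * (d i * M.mulVec d i)) ≤ 0 :=
      Finset.sum_nonpos fun i _ =>
        mul_nonpos_iff.mpr (Or.inl ⟨sq_nonneg (y i),
          mul_nonpos_iff.mpr (Or.inl ⟨(hd i).le, hMd i⟩)⟩)
    -- nonnegativity of summands in second term
    have hP : ∀ i j, 0 ≤ (M i j * d i * d j) * (y i - y j) ^ 2 := by
      intro i j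
      rcases eq_or_ne i j with rfl | h
      · simp
      · exact mul_nonneg (mul_nonneg (mul_nonneg (hoff i j h) (hd i).le) (hd j).le)
          (sq_nonneg _)
    -- find an edge with differing y values
    push_neg at hconst
    obtain ⟨a, b, hab⟩ := hconst
    have hedge : ∃ u v, u ≠ v ∧ 0 < M u v ∧ y u ≠ y v := by
      by_contra h
      push_neg at h
      have hadj : ∀ u v, (SimpleGraph.fromRel fun i j => 0 < M i j).Adj u v → y u = y v := by
        intro u v huv
        obtain ⟨hne, h1 | h1⟩ := huv
        · exact h u v hne h1
        · exact h u v hne (by rw [hM v u]; exact h1)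
      have hwalk : ∀ {u v : Fin r}
          (p : (SimpleGraph.fromRel fun i j => 0 < M i j).Walk u v), y u = y v := by
        intro u v p
        induction p with
        | nil => rfl
        | cons h' _ ih => exact (hadj _ _ h').trans ih
      exact hab (hwalk (hconn.preconnected a b).some)
    obtain ⟨u, v, huv, hMuv, hyuv⟩ := hedge
    have hterm : 0 < (M u v * d u * d v) * (y u - y v) ^ 2 := by
      have hne : y u - y v ≠ 0 := sub_ne_zero.mpr hyuv
      have h2 : 0 < (y u - y v) ^ 2 :=
        lt_of_le_of_ne (sq_nonneg _) (Ne.symm (pow_ne_zero 2 hne))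
      have h3 : 0 < M u v * d u * d v := mul_pos (mul_pos hMuv (hd u)) (hd v)
      exact mul_pos h3 h2
    have T2 : 0 < ∑ i, ∑ j, (M i j * d i * d j) * (y i - y j) ^ 2 := by
      refine lt_of_lt_of_le ?_
        (Finset.single_le_sum (f := fun i => ∑ j, (M i j * d i * d j) * (y i - y j) ^ 2)
          (fun i _ => Finset.sum_nonneg fun j _ => hP i j) (Finset.mem_univ u))
      exact lt_of_lt_of_le hterm (Finset.single_le_sum (fun j _ => hP u j) (Finset.mem_univ v))
    rw [key]
    linarith
end

section
/- (Zariski's lemma, matrix form) Let M be a symmetric real r×r matrix with M_{ij} ≥ 0 for all i ≠ j. Suppose there exists a vector z with z_i > 0 for all i and Mz = 0. Then M is negative semidefinite, and for any vector x one has xᵀMx = 0 if and only if Mx = 0. -/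
open Matrix

/-- Zariski's lemma, matrix form: a symmetric real matrix with nonnegative off-diagonal
entries killing a positive vector is negative semidefinite, and `xᵀMx = 0` iff `Mx = 0`. -/
theorem zariski_lemma_matrix_form {r : ℕ} (M : Matrix (Fin r) (Fin r) ℝ)
    (hsymm : M.IsSymm)
    (hoff : ∀ i j, i ≠ j → 0 ≤ M i j)
    (z : Fin r → ℝ) (hz : ∀ i, 0 < z i) (hMz : M.mulVec z = 0) :
    (∀ x : Fin r → ℝ, x ⬝ᵥ M.mulVec x ≤ 0) ∧
    (∀ x : Fin r → ℝ, (x ⬝ᵥ M.mulVec x = 0 ↔ M.mulVec x = 0)) := by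
  have hzne : ∀ i, z i ≠ 0 := fun i => (hz i).ne'
  have hsym : ∀ i j, M i j = M j i := fun i j => hsymm.apply j i
  have hrow : ∀ i, ∑ j, M i j * z j = 0 := by
    intro i
    have := congrFun hMz i
    simpa [Matrix.mulVec, dotProduct] using this
  have hQ : ∀ x : Fin r → ℝ, x ⬝ᵥ M.mulVec x = ∑ i, ∑ j, M i j * x i * x j := by
    intro x
    simp [dotProduct, Matrix.mulVec, Finset.mul_sum]
    congr 1; ext i; congr 1; ext j; ring
  have key : ∀ x : Fin r → ℝ,
      x ⬝ᵥ M.mulVec x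
        = -(1/2) * ∑ i, ∑ j, M i j * z i * z j * (x i / z i - x j / z j)^2 := by
    intro x
    have hx : ∀ i, z i * (x i / z i) = x i := fun i => mul_div_cancel₀ _ (hzne i)
    have expand : ∀ i j, M i j * z i * z j * (x i / z i - x j / z j)^2
        = (z i * (x i / z i)^2) * (M i j * z j)
          - 2 * (M i j * (z i * (x i / z i)) * (z j * (x j / z j)))
          + (z j * (x j / z j)^2) * (M i j * z i) := by
      intro i j; ring
    have S1 : ∑ i, ∑ j, (z i * (x i / z i)^2) * (M i j * z j) = 0 := by
      refine Finset.sum_eq_zero fun i _ => ?_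
      rw [← Finset.mul_sum, hrow i, mul_zero]
    have S3 : ∑ i, ∑ j, (z j * (x j / z j)^2) * (M i j * z i) = 0 := by
      rw [Finset.sum_comm]
      refine Finset.sum_eq_zero fun j _ => ?_
      have : ∑ i, (z j * (x j / z j)^2) * (M i j * z i)
          = (z j * (x j / z j)^2) * ∑ i, M j i * z i := by
        rw [Finset.mul_sum]; exact Finset.sum_congr rfl fun i _ => by rw [hsym i j]
      rw [this, hrow j, mul_zero]
    have S2 : ∑ i, ∑ j, M i j * (z i * (x i / z i)) * (z j * (x j / z j))
        = ∑ i, ∑ j, M i j * x i * x j := by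
      refine Finset.sum_congr rfl fun i _ => Finset.sum_congr rfl fun j _ => ?_
      rw [hx i, hx j]
    have : ∑ i, ∑ j, M i j * z i * z j * (x i / z i - x j / z j)^2
        = -2 * (x ⬝ᵥ M.mulVec x) := by
      calc ∑ i, ∑ j, M i j * z i * z j * (x i / z i - x j / z j)^2
          = ∑ i, ∑ j, ((z i * (x i / z i)^2) * (M i j * z j)
            - 2 * (M i j * (z i * (x i / z i)) * (z j * (x j / z j)))
            + (z j * (x j / z j)^2) * (M i j * z i)) := by
            exact Finset.sum_congr rfl fun i _ => Finset.sum_congr rfl fun j _ => expand i j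
        _ = (∑ i, ∑ j, (z i * (x i / z i)^2) * (M i j * z j))
            - 2 * (∑ i, ∑ j, M i j * (z i * (x i / z i)) * (z j * (x j / z j)))
            + (∑ i, ∑ j, (z j * (x j / z j)^2) * (M i j * z i)) := by
            simp [Finset.sum_add_distrib, Finset.sum_sub_distrib, Finset.mul_sum]
        _ = -2 * (x ⬝ᵥ M.mulVec x) := by
            rw [S1, S2, S3, hQ x]; ring
    rw [this]; ring
  have nonneg : ∀ x : Fin r → ℝ,
      0 ≤ ∑ i, ∑ j, M i j * z i * z j * (x i / z i - x j / z j)^2 := by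
    intro x
    refine Finset.sum_nonneg fun i _ => Finset.sum_nonneg fun j _ => ?_
    rcases eq_or_ne i j with h | h
    · subst h; simp
    · exact mul_nonneg (mul_nonneg (mul_nonneg (hoff i j h) (hz i).le) (hz j).le) (sq_nonneg _)
  have neg : ∀ x : Fin r → ℝ, x ⬝ᵥ M.mulVec x ≤ 0 := by
    intro x
    rw [key x]
    nlinarith [nonneg x]
  refine ⟨neg, fun x => ⟨fun h0 => ?_, fun h0 => by rw [h0, dotProduct_zero]⟩⟩
  · -- from xMx = 0 deduce Mx = 0
    have hsum0 : ∑ i, ∑ j, M i j * z i * z j * (x i / z i - x j / z j)^2 = 0 := by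
      have := key x
      rw [h0] at this
      linarith
    have hterm : ∀ i j, M i j * z i * z j * (x i / z i - x j / z j)^2 = 0 := by
      intro i j
      rcases eq_or_ne i j with h | h
      · subst h; simp
      · have h1 : ∀ i ∈ Finset.univ, (0:ℝ) ≤ ∑ j, M i j * z i * z j * (x i / z i - x j / z j)^2 :=
          fun i _ => Finset.sum_nonneg fun j _ => by
            rcases eq_or_ne i j with h' | h'
            · subst h'; simp
            · exact mul_nonneg (mul_nonneg (mul_nonneg (hoff i j h') (hz i).le) (hz j).le) (sq_nonneg _)
        have h2 : ∑ j, M i j * z i * z j * (x i / z i - x j / z j)^2 = 0 :=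
          (Finset.sum_eq_zero_iff_of_nonneg h1).mp hsum0 i (Finset.mem_univ i)
        have h3 : ∀ j ∈ Finset.univ, (0:ℝ) ≤ M i j * z i * z j * (x i / z i - x j / z j)^2 :=
          fun j _ => by
            rcases eq_or_ne i j with h' | h'
            · subst h'; simp
            · exact mul_nonneg (mul_nonneg (mul_nonneg (hoff i j h') (hz i).le) (hz j).le) (sq_nonneg _)
        exact (Finset.sum_eq_zero_iff_of_nonneg h3).mp h2 j (Finset.mem_univ j)
    have hMd : ∀ i j, M i j * (x j / z j - x i / z i) = 0 := by
      intro i j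
      rcases eq_or_ne i j with h | h
      · subst h; simp
      · have := hterm i j
        rcases mul_eq_zero.mp this with h1 | h1
        · rcases mul_eq_zero.mp h1 with h2 | h2
          · rcases mul_eq_zero.mp h2 with h3 | h3
            · rw [h3, zero_mul]
            · exact absurd h3 (hzne i)
          · exact absurd h2 (hzne j)
        · have : x i / z i - x j / z j = 0 := by
            exact pow_eq_zero_iff (by norm_num) |>.mp h1
          have : x j / z j - x i / z i = 0 := by linarith
          rw [this, mul_zero]
    funext i
    have : M.mulVec x i = ∑ j, M i j * z j * (x j / z j) := by
      simp [Matrix.mulVec, dotProduct]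
      exact Finset.sum_congr rfl fun j _ => by
        rw [mul_assoc, mul_div_cancel₀ _ (hzne j)]
    show M.mulVec x i = 0
    rw [this]
    calc ∑ j, M i j * z j * (x j / z j)
        = ∑ j, ((x i / z i) * (M i j * z j) + z j * (M i j * (x j / z j - x i / z i))) :=
          Finset.sum_congr rfl fun j _ => by ring
      _ = 0 := by
          rw [Finset.sum_add_distrib]
          have h1 : ∑ j, (x i / z i) * (M i j * z j) = 0 := by
            rw [← Finset.mul_sum, hrow i, mul_zero]
          have h2 : ∑ j, z j * (M i j * (x j / z j - x i / z i)) = 0 :=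
            Finset.sum_eq_zero fun j _ => by rw [hMd i j, mul_zero]
          rw [h1, h2, add_zero]
end
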